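/- arXiv:1812.08212 — 2 statements merged into one kernel-verified Lean document; each statement's English description precedes it below -/
import Mathlib

section
/- Let R be a nontrivial commutative ring with identity such that Z(R) is an ideal of R. If there exists a pair of zero-divisors x, y of R with ann(x,y) = (0), then the diameter of the zero-divisor graph Γ(R) equals 3. -/
/-- The set of zero-divisors of a commutative ring (including `0`). -/
def zdSet (R : Type*) [CommRing R] : Set R :=
  {x : R | ∃ y : R, y ≠ 0 ∧ x * y = 0}

/-- The set of nonzero zero-divisors. -/
def zdStar (R : Type*) [CommRing R] : Set R :=
  {x : R | x ≠ 0 ∧ ∃ y : R, y ≠ 0 ∧ x * y = 0}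

/-- The zero-divisor graph `Γ(R)`: vertices are the nonzero zero-divisors, and distinct
`x`, `y` are adjacent iff `x * y = 0`. -/
def zdGraph (R : Type*) [CommRing R] : SimpleGraph (zdStar R) where
  Adj x y := x.1 ≠ y.1 ∧ x.1 * y.1 = 0
  symm := ⟨fun x y h => ⟨h.1.symm, by rw [mul_comm]; exact h.2⟩⟩
  loopless := ⟨fun x h => h.1 rfl⟩

/-- The extended zero-divisor graph `Γ̃(R)`: vertices are the nonzero zero-divisors, and
distinct `x`, `y` are adjacent iff `x * y = 0` or `x + y ∈ Z(R)`. -/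
def zdExtGraph (R : Type*) [CommRing R] : SimpleGraph (zdStar R) where
  Adj x y := x.1 ≠ y.1 ∧ (x.1 * y.1 = 0 ∨ x.1 + y.1 ∈ zdSet R)
  symm := ⟨fun x y h => ⟨h.1.symm, by rw [mul_comm, add_comm]; exact h.2⟩⟩
  loopless := ⟨fun x h => h.1 rfl⟩

universe u

/-!
Any two vertices `u`, `v` of `Γ(R)` are at distance at most three: pick annihilators `a` of `u`
and `b` of `v`; if `ab = 0` then each of `u, a, b, v` equals or is adjacent to the next, and
otherwise `ab` is a common neighbour of `u` and `v`. Conversely, when `ann(x, y) = 0` the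
vertices `x` and `y` have no common neighbour, and `xy ≠ 0` because `x + y` is a zero-divisor:
if `c(x + y) = 0` and `xy = 0`, then `cx ∈ ann(x, y)`, so `cx = cy = 0` and `c = 0`.
-/

section

variable {R : Type*} [CommRing R]

lemma zdGraph_edist_le_one_of_mul_eq_zero {u v : zdStar R} (h : u.1 * v.1 = 0) :
    (zdGraph R).edist u v ≤ 1 := by
  rw [SimpleGraph.edist_le_one_iff_adj_or_eq]
  by_cases huv : u = v
  · exact Or.inr huv
  · exact Or.inl ⟨fun h' => huv (Subtype.ext h'), h⟩

lemma exists_zdStar_mul_eq_zero (u : zdStar R) : ∃ w : zdStar R, u.1 * w.1 = 0 := by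
  obtain ⟨hu0, w, hw0, huw⟩ := u.2
  exact ⟨⟨w, hw0, u.1, hu0, by rw [mul_comm, huw]⟩, huw⟩

lemma zdGraph_edist_le_three (u v : zdStar R) : (zdGraph R).edist u v ≤ 3 := by
  obtain ⟨a, ha⟩ := exists_zdStar_mul_eq_zero u
  obtain ⟨b, hb⟩ := exists_zdStar_mul_eq_zero v
  by_cases hab : a.1 * b.1 = 0
  · calc (zdGraph R).edist u v
        ≤ (zdGraph R).edist u a + (zdGraph R).edist a b + (zdGraph R).edist b v :=
          SimpleGraph.edist_triangle.trans (add_le_add_left SimpleGraph.edist_triangle _)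
      _ ≤ 1 + 1 + 1 := by
          gcongr <;> apply zdGraph_edist_le_one_of_mul_eq_zero
          · exact ha
          · exact hab
          · rw [mul_comm, hb]
      _ = 3 := by norm_num
  · have hcu : u.1 * (a.1 * b.1) = 0 := by rw [← mul_assoc, ha, zero_mul]
    have hcv : a.1 * b.1 * v.1 = 0 := by rw [mul_assoc, mul_comm b.1, hb, mul_zero]
    let c : zdStar R := ⟨a.1 * b.1, hab, u.1, u.2.1, by rw [mul_comm, hcu]⟩
    calc (zdGraph R).edist u v ≤ (zdGraph R).edist u c + (zdGraph R).edist c v :=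
          SimpleGraph.edist_triangle
      _ ≤ 1 + 1 := add_le_add (zdGraph_edist_le_one_of_mul_eq_zero hcu)
          (zdGraph_edist_le_one_of_mul_eq_zero hcv)
      _ ≤ 3 := by norm_num

lemma mul_ne_zero_of_add_mem_zdSet {x y : R} (hsum : x + y ∈ zdSet R)
    (hann : ∀ a : R, a * x = 0 → a * y = 0 → a = 0) : x * y ≠ 0 := by
  intro hxy
  obtain ⟨c, hc0, hc⟩ := hsum
  have hcx : c * x = 0 :=
    hann _ (by linear_combination x * hc - c * hxy) (by linear_combination c * hxy)
  exact hc0 (hann c hcx (by linear_combination hc - hcx))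

lemma three_le_zdGraph_edist {u v : zdStar R} (huv : u.1 * v.1 ≠ 0)
    (hann : ∀ a : R, a * u.1 = 0 → a * v.1 = 0 → a = 0) : 3 ≤ (zdGraph R).edist u v := by
  have hne : u ≠ v := by
    rintro rfl
    obtain ⟨b, hb0, hub⟩ := u.2.2
    rw [mul_comm] at hub
    exact hb0 (hann b hub hub)
  have hnadj : ¬(zdGraph R).Adj u v := fun h => huv h.2
  have hcommon : (zdGraph R).commonNeighbors u v = ∅ := by
    refine Set.eq_empty_of_forall_notMem fun w hw => ?_
    rw [SimpleGraph.mem_commonNeighbors] at hw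
    exact w.2.1 (hann w.1 (by rw [mul_comm]; exact hw.1.2) hw.2.symm.2)
  exact Order.add_one_le_of_lt (SimpleGraph.two_lt_edist_iff.2 ⟨hne, hnadj, hcommon⟩)

end

theorem stmt6_general (R : Type u) [CommRing R]
    (hideal : ∃ I : Ideal R, (I : Set R) = zdSet R)
    (hann : ∃ x ∈ zdSet R, ∃ y ∈ zdSet R, ∀ a : R, a * x = 0 → a * y = 0 → a = 0) :
    (zdGraph R).ediam = 3 := by
  obtain ⟨x, hx, y, hy, hann⟩ := hann
  obtain ⟨I, hI⟩ := hideal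
  have hsum : x + y ∈ zdSet R := by
    rw [← hI] at hx hy ⊢
    exact I.add_mem hx hy
  have hxy := mul_ne_zero_of_add_mem_zdSet hsum hann
  let X : zdStar R := ⟨x, left_ne_zero_of_mul hxy, hx⟩
  let Y : zdStar R := ⟨y, right_ne_zero_of_mul hxy, hy⟩
  refine le_antisymm (SimpleGraph.ediam_le_of_edist_le zdGraph_edist_le_three) ?_
  exact (three_le_zdGraph_edist (u := X) (v := Y) hxy hann).trans SimpleGraph.edist_le_ediam

theorem stmt6 (R : Type u) [CommRing R] [Nontrivial R]
    (hcard : (zdStar R).Nontrivial)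
    (hideal : ∃ I : Ideal R, (I : Set R) = zdSet R)
    (hann : ∃ x ∈ zdSet R, ∃ y ∈ zdSet R, ∀ a : R, a * x = 0 → a * y = 0 → a = 0) :
    (zdGraph R).ediam = 3 :=
  stmt6_general R hideal hann
end

section
/- Let R be a nontrivial commutative ring with identity having more than one nonzero zero-divisor. Then diam(Γ(R)) = 2 if and only if either (i) R is isomorphic to a subring of a product of two integral domains and R is not isomorphic to ℤ/2ℤ × ℤ/2ℤ, or (ii) Z(R) is an ideal of R, Z(R)² ≠ (0), and for each pair of distinct zero-divisors x, y of R one has ann(x,y) ≠ (0). -/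
universe u

/-!
Write `Z = Z(R)`. The diameter is `2` exactly when some two distinct vertices have nonzero
product and any two zero-divisors with nonzero product have a common nonzero annihilator.

If `Z` is an ideal, a pair `x, y ∈ Z` with `x * y = 0` and `x * x ≠ 0` gets its common
annihilator from the pair `x, x + y`. If `Z` is not an ideal, take `x, y ∈ Z` with `x + y`
regular: then `x * y = 0`, every zero-divisor kills `x` or `y`, hence `ann x` and `ann y` are
primes meeting in `0` and `R` embeds in `R ⧸ ann x × R ⧸ ann y`. Conversely, if primes `P, Q`
meet in `0`, then an annihilator of `x` outside `P` also kills every zero-divisor `y` with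
`x * y ≠ 0`. Finally, in a reduced ring whose zero-divisor graph is complete and nonempty every
nonzero zero-divisor `e` is idempotent, and `R ≅ R ⧸ (1 - e) × R ⧸ (e)` with both factors `ℤ/2`.
-/

namespace SimpleGraph

variable {V : Type*} {G : SimpleGraph V}

lemma ediam_eq_two_iff :
    G.ediam = 2 ↔ (∀ u v, u ≠ v → ¬ G.Adj u v → (G.commonNeighbors u v).Nonempty) ∧
      ∃ u v, u ≠ v ∧ ¬ G.Adj u v := by
  have h_le_two : G.ediam ≤ 2 ↔
      ∀ u v, u ≠ v → ¬ G.Adj u v → (G.commonNeighbors u v).Nonempty := by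
    rw [ediam_le_iff]
    refine forall₂_congr fun u v ↦ ?_
    rw [← not_lt, two_lt_edist_iff, Set.nonempty_iff_ne_empty]
    tauto
  have h_le_one : G.ediam ≤ 1 ↔ ∀ u v, u ≠ v → G.Adj u v := by
    rw [ediam_le_iff]
    refine forall₂_congr fun u v ↦ ?_
    rw [edist_le_one_iff_adj_or_eq]
    tauto
  rw [le_antisymm_iff, ← one_add_one_eq_two, ENat.add_one_le_iff ENat.one_ne_top, ← not_le,
    one_add_one_eq_two, h_le_two, h_le_one]
  push Not
  rfl

end SimpleGraph

section ZeroDivisors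

variable {R : Type*} [CommRing R]

def HasCommonAnnihilators (R : Type*) [CommRing R] : Prop :=
  ∀ x ∈ zdSet R, ∀ y ∈ zdSet R, x * y ≠ 0 → ∃ a : R, a ≠ 0 ∧ a * x = 0 ∧ a * y = 0

lemma zdGraph_ediam_eq_two_iff :
    (zdGraph R).ediam = 2 ↔
      HasCommonAnnihilators R ∧ ∃ x ∈ zdStar R, ∃ y ∈ zdStar R, x ≠ y ∧ x * y ≠ 0 := by
  rw [SimpleGraph.ediam_eq_two_iff]
  refine and_congr ⟨fun h x hx y hy hxy ↦ ?_, fun h u v huv hadj ↦ ?_⟩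
    ⟨fun ⟨u, v, huv, hadj⟩ ↦ ?_, fun ⟨x, hx, y, hy, hne, hxy⟩ ↦ ?_⟩
  · have hx0 : x ≠ 0 := by rintro rfl; simp at hxy
    have hy0 : y ≠ 0 := by rintro rfl; simp at hxy
    rcases eq_or_ne x y with rfl | hne
    · obtain ⟨a, ha, hxa⟩ := hx
      exact ⟨a, ha, by rw [mul_comm, hxa], by rw [mul_comm, hxa]⟩
    · obtain ⟨w, hxw, hyw⟩ :=
        h ⟨x, hx0, hx⟩ ⟨y, hy0, hy⟩ (fun h ↦ hne (congrArg Subtype.val h)) fun hadj ↦ hxy hadj.2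
      exact ⟨w, w.2.1, by rw [mul_comm, hxw.2], by rw [mul_comm, hyw.2]⟩
  · have huv' : u.1 ≠ v.1 := Subtype.coe_ne_coe.2 huv
    have hmul : u.1 * v.1 ≠ 0 := fun h ↦ hadj ⟨huv', h⟩
    obtain ⟨a, ha, hau, hav⟩ := h u u.2.2 v v.2.2 hmul
    refine ⟨⟨a, ha, u, u.2.1, hau⟩, ⟨?_, by rw [mul_comm, hau]⟩, ⟨?_, by rw [mul_comm, hav]⟩⟩
    · rintro rfl; exact hmul hav
    · rintro rfl; exact hmul (by rw [mul_comm, hau])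
  · exact ⟨u, u.2, v, v.2, Subtype.coe_ne_coe.2 huv, fun h ↦ hadj ⟨Subtype.coe_ne_coe.2 huv, h⟩⟩
  · exact ⟨⟨x, hx⟩, ⟨y, hy⟩, fun h ↦ hne (congrArg Subtype.val h), fun hadj ↦ hxy hadj.2⟩

lemma HasCommonAnnihilators.of_forall_ne
    (h : ∀ x ∈ zdSet R, ∀ y ∈ zdSet R, x ≠ y → ∃ a : R, a ≠ 0 ∧ a * x = 0 ∧ a * y = 0) :
    HasCommonAnnihilators R := by
  intro x hx y hy hxy
  rcases eq_or_ne x y with rfl | hne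
  · obtain ⟨a, ha, hxa⟩ := hx
    exact ⟨a, ha, by rw [mul_comm, hxa], by rw [mul_comm, hxa]⟩
  · exact h x hx y hy hne

lemma zero_mem_zdSet [Nontrivial R] : (0 : R) ∈ zdSet R :=
  ⟨1, one_ne_zero, zero_mul 1⟩

lemma mul_mem_zdSet (r : R) {x : R} (hx : x ∈ zdSet R) : r * x ∈ zdSet R :=
  let ⟨y, hy, hxy⟩ := hx
  ⟨y, hy, by rw [mul_assoc, hxy, mul_zero]⟩

lemma eq_zero_of_mul_eq_zero_of_notMem_zdSet {z m : R} (hz : z ∉ zdSet R) (h : z * m = 0) :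
    m = 0 := by
  by_contra hm
  exact hz ⟨m, hm, h⟩

lemma not_isUnit_of_mem_zdSet {x : R} (hx : x ∈ zdSet R) : ¬ IsUnit x := by
  obtain ⟨y, hy, hxy⟩ := hx
  exact fun hu ↦ hy (hu.mul_right_eq_zero.1 hxy)

lemma map_mem_zdSet {S F : Type*} [CommRing S] [FunLike F R S] [MonoidWithZeroHomClass F R S]
    {f : F} (hf : Function.Injective f) {x : R} (hx : x ∈ zdSet R) : f x ∈ zdSet S :=
  let ⟨y, hy, hxy⟩ := hx
  ⟨f y, (map_ne_zero_iff f hf).2 hy, by rw [← map_mul, hxy, map_zero]⟩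

lemma exists_add_notMem_zdSet [Nontrivial R] (h : ¬ ∃ I : Ideal R, (I : Set R) = zdSet R) :
    ∃ x ∈ zdSet R, ∃ y ∈ zdSet R, x + y ∉ zdSet R := by
  by_contra! hadd
  exact h ⟨{ carrier := zdSet R
             add_mem' := fun hx hy ↦ hadd _ hx _ hy
             zero_mem' := zero_mem_zdSet
             smul_mem' := mul_mem_zdSet }, rfl⟩

end ZeroDivisors

section IdealCase

variable {R : Type*} [CommRing R] {I : Ideal R}

lemma exists_annihilator_of_coe_eq_zdSet (hI : (I : Set R) = zdSet R)
    (h : HasCommonAnnihilators R) {x y : R} (hx : x ∈ zdSet R) (hy : y ∈ zdSet R) :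
    ∃ a : R, a ≠ 0 ∧ a * x = 0 ∧ a * y = 0 := by
  by_cases hxy : x * y = 0
  · by_cases hxx : x * x = 0
    · rcases eq_or_ne x 0 with rfl | hx0
      · obtain ⟨a, ha, hya⟩ := hy
        exact ⟨a, ha, mul_zero a, by rw [mul_comm, hya]⟩
      · exact ⟨x, hx0, hxx, hxy⟩
    · have hxy_mem : x + y ∈ zdSet R := by
        rw [← hI] at hx hy ⊢
        exact I.add_mem hx hy
      obtain ⟨a, ha, hax, haxy⟩ := h x hx (x + y) hxy_mem (by rwa [mul_add, hxy, add_zero])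
      exact ⟨a, ha, hax, by linear_combination haxy - hax⟩
  · exact h x hx y hy hxy

lemma exists_ne_mul_ne_zero_of_coe_eq_zdSet (hI : (I : Set R) = zdSet R) {x y : R}
    (hx : x ∈ zdSet R) (hy : y ∈ zdSet R) (hxy : x * y ≠ 0) :
    ∃ x ∈ zdStar R, ∃ y ∈ zdStar R, x ≠ y ∧ x * y ≠ 0 := by
  have hx0 : x ≠ 0 := by rintro rfl; simp at hxy
  have hy0 : y ≠ 0 := by rintro rfl; simp at hxy
  rcases eq_or_ne x y with rfl | hne
  · have ⟨v, hv, hxv⟩ := hx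
    have hxv_mem : x + v ∈ zdSet R := by
      have hv_mem : v ∈ zdSet R := ⟨x, hx0, by rw [mul_comm, hxv]⟩
      rw [← hI] at hx hv_mem ⊢
      exact I.add_mem hx hv_mem
    have hmul : x * (x + v) ≠ 0 := by rwa [mul_add, hxv, add_zero]
    refine ⟨x, ⟨hx0, hx⟩, x + v, ⟨?_, hxv_mem⟩, ?_, hmul⟩
    · rintro h; exact hmul (by rw [h, mul_zero])
    · intro h; exact hv (by linear_combination -h)
  · exact ⟨x, ⟨hx0, hx⟩, y, ⟨hy0, hy⟩, hne, hxy⟩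

end IdealCase

section NotIdealCase

variable {R : Type*} [CommRing R] {x y : R}

lemma eq_zero_of_mul_eq_zero_of_add_notMem_zdSet (hxy : x + y ∉ zdSet R) {m : R}
    (hmx : m * x = 0) (hmy : m * y = 0) : m = 0 :=
  eq_zero_of_mul_eq_zero_of_notMem_zdSet hxy (by linear_combination hmx + hmy)

lemma mul_eq_zero_of_add_notMem_zdSet (h : HasCommonAnnihilators R) (hx : x ∈ zdSet R)
    (hy : y ∈ zdSet R) (hxy : x + y ∉ zdSet R) : x * y = 0 := by
  by_contra hne
  obtain ⟨a, ha, hax, hay⟩ := h x hx y hy hne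
  exact ha (eq_zero_of_mul_eq_zero_of_add_notMem_zdSet hxy hax hay)

lemma mul_eq_zero_or_mul_eq_zero_of_add_notMem_zdSet (h : HasCommonAnnihilators R)
    (hx : x ∈ zdSet R) (hy : y ∈ zdSet R) (hxy : x + y ∉ zdSet R) {u : R} (hu : u ∈ zdSet R) :
    u * x = 0 ∨ u * y = 0 := by
  have hxy0 := mul_eq_zero_of_add_notMem_zdSet h hx hy hxy
  by_contra! ⟨hux, huy⟩
  have hu0 : u ≠ 0 := by rintro rfl; simp at hux
  obtain ⟨a, ha, hau, hax⟩ := h u hu x hx hux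
  obtain ⟨b, hb, hbu, hby⟩ := h u hu y hy huy
  -- `x + u * y` and `y + u * x` are zero-divisors whose product `u * (x + y) ^ 2` is nonzero.
  have hs : x + u * y ∈ zdSet R := ⟨a, ha, by linear_combination hax + y * hau⟩
  have ht : y + u * x ∈ zdSet R := ⟨b, hb, by linear_combination hby + x * hbu⟩
  have hst : (x + u * y) * (y + u * x) ≠ 0 := fun hst ↦
    hu0 <| eq_zero_of_mul_eq_zero_of_notMem_zdSet hxy <|
      eq_zero_of_mul_eq_zero_of_notMem_zdSet hxy (by linear_combination hst - (1 - u) ^ 2 * hxy0)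
  obtain ⟨m, hm, hms, hmt⟩ := h _ hs _ ht hst
  have hmx : m * x = 0 := eq_zero_of_mul_eq_zero_of_add_notMem_zdSet hxy
    (by linear_combination x * hms - m * u * hxy0) (by linear_combination m * hxy0)
  have hmy : m * y = 0 := eq_zero_of_mul_eq_zero_of_add_notMem_zdSet hxy
    (by linear_combination m * hxy0) (by linear_combination y * hmt - m * u * hxy0)
  exact hm (eq_zero_of_mul_eq_zero_of_add_notMem_zdSet hxy hmx hmy)

lemma isPrime_annihilator_of_add_notMem_zdSet (h : HasCommonAnnihilators R) (hx : x ∈ zdSet R)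
    (hy : y ∈ zdSet R) (hxy : x + y ∉ zdSet R) : (R ∙ x).annihilator.IsPrime := by
  have hxy0 := mul_eq_zero_of_add_notMem_zdSet h hx hy hxy
  have hy0 : y ≠ 0 := by rintro rfl; exact hxy (by rwa [add_zero])
  rw [Ideal.isPrime_iff, Ideal.ne_top_iff_one]
  simp only [Submodule.mem_annihilator_span_singleton, smul_eq_mul, one_mul]
  refine ⟨?_, fun {r s} hrs ↦ or_iff_not_imp_right.2 fun hsx ↦ ?_⟩
  · rintro rfl; exact hxy (by rwa [zero_add])
  have hrxy : r * x + y ∈ zdSet R := ⟨s * x, hsx, by linear_combination x * hrs + s * hxy0⟩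
  rcases mul_eq_zero_or_mul_eq_zero_of_add_notMem_zdSet h hx hy hxy hrxy with hr | hr
  · exact eq_zero_of_mul_eq_zero_of_add_notMem_zdSet hxy (by linear_combination hr - hxy0)
      (by linear_combination r * hxy0)
  · exact absurd (eq_zero_of_mul_eq_zero_of_add_notMem_zdSet hxy (by linear_combination hxy0)
      (by linear_combination hr - r * hxy0)) hy0

lemma exists_isPrime_inf_eq_bot_of_add_notMem_zdSet (h : HasCommonAnnihilators R)
    (hx : x ∈ zdSet R) (hy : y ∈ zdSet R) (hxy : x + y ∉ zdSet R) :
    ∃ P Q : Ideal R, P.IsPrime ∧ Q.IsPrime ∧ P ⊓ Q = ⊥ := by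
  refine ⟨_, _, isPrime_annihilator_of_add_notMem_zdSet h hx hy hxy,
    isPrime_annihilator_of_add_notMem_zdSet h hy hx (by rwa [add_comm]), ?_⟩
  rw [eq_bot_iff]
  rintro m ⟨hmx, hmy⟩
  rw [SetLike.mem_coe, Submodule.mem_annihilator_span_singleton, smul_eq_mul] at hmx hmy
  exact (Ideal.mem_bot).2 (eq_zero_of_mul_eq_zero_of_add_notMem_zdSet hxy hmx hmy)

end NotIdealCase

section TwoPrimes

lemma exists_injective_prod_isDomain_iff {R : Type u} [CommRing R] :
    (∃ (D₁ D₂ : Type u) (_ : CommRing D₁) (_ : CommRing D₂) (_ : IsDomain D₁)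
      (_ : IsDomain D₂) (f : R →+* D₁ × D₂), Function.Injective f) ↔
      ∃ P Q : Ideal R, P.IsPrime ∧ Q.IsPrime ∧ P ⊓ Q = ⊥ := by
  constructor
  · rintro ⟨D₁, D₂, _, _, _, _, f, hf⟩
    refine ⟨RingHom.ker ((RingHom.fst D₁ D₂).comp f), RingHom.ker ((RingHom.snd D₁ D₂).comp f),
      RingHom.ker_isPrime _, RingHom.ker_isPrime _, eq_bot_iff.2 fun r ⟨h₁, h₂⟩ ↦ ?_⟩
    exact (Ideal.mem_bot).2 ((map_eq_zero_iff f hf).1 (Prod.ext h₁ h₂))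
  · rintro ⟨P, Q, hP, hQ, hPQ⟩
    refine ⟨R ⧸ P, R ⧸ Q, inferInstance, inferInstance, inferInstance, inferInstance,
      (Ideal.Quotient.mk P).prod (Ideal.Quotient.mk Q), (injective_iff_map_eq_zero _).2 ?_⟩
    intro r hr
    simp only [RingHom.prod_apply, Prod.mk_eq_zero, Ideal.Quotient.eq_zero_iff_mem] at hr
    exact (Submodule.eq_bot_iff _).1 hPQ r hr

variable {R : Type*} [CommRing R] {P Q : Ideal R}

lemma mul_eq_zero_of_isPrime_inf_eq_bot (hP : P.IsPrime) (hQ : Q.IsPrime) (hPQ : P ⊓ Q = ⊥)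
    {x x' y : R} (hxx' : x * x' = 0) (hx'P : x' ∉ P) (hy : y ∈ zdSet R) (hxy : x * y ≠ 0) :
    x' * y = 0 := by
  have eq_zero_of_mem {z : R} (hzP : z ∈ P) (hzQ : z ∈ Q) : z = 0 :=
    (Submodule.eq_bot_iff _).1 hPQ z ⟨hzP, hzQ⟩
  obtain ⟨y', hy', hyy'⟩ := hy
  have hxP : x ∈ P := (hP.mem_or_mem_of_mul_eq_zero hxx').resolve_right hx'P
  have hxyQ : x * y ∉ Q := fun h ↦ hxy (eq_zero_of_mem (P.mul_mem_right y hxP) h)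
  have hx'Q : x' ∈ Q := (hQ.mem_or_mem_of_mul_eq_zero hxx').resolve_left
    fun h ↦ hxyQ (Q.mul_mem_right y h)
  have hy'Q : y' ∈ Q := (hQ.mem_or_mem_of_mul_eq_zero hyy').resolve_left
    fun h ↦ hxyQ (Q.mul_mem_left x h)
  have hyP : y ∈ P := (hP.mem_or_mem_of_mul_eq_zero hyy').resolve_right
    fun h ↦ hy' (eq_zero_of_mem h hy'Q)
  exact eq_zero_of_mem (P.mul_mem_left x' hyP) (Q.mul_mem_right y hx'Q)

lemma hasCommonAnnihilators_of_isPrime_inf_eq_bot (hP : P.IsPrime) (hQ : Q.IsPrime)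
    (hPQ : P ⊓ Q = ⊥) : HasCommonAnnihilators R := by
  rintro x ⟨x', hx', hxx'⟩ y hy hxy
  refine ⟨x', hx', by rw [mul_comm, hxx'], ?_⟩
  by_cases hx'P : x' ∈ P
  · have hx'Q : x' ∉ Q := fun h ↦ hx' ((Submodule.eq_bot_iff _).1 hPQ x' ⟨hx'P, h⟩)
    exact mul_eq_zero_of_isPrime_inf_eq_bot hQ hP (by rwa [inf_comm]) hxx' hx'Q hy hxy
  · exact mul_eq_zero_of_isPrime_inf_eq_bot hP hQ hPQ hxx' hx'P hy hxy

lemma isReduced_of_isPrime_inf_eq_bot (hP : P.IsPrime) (hQ : Q.IsPrime) (hPQ : P ⊓ Q = ⊥) :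
    IsReduced R where
  eq_zero x := fun ⟨n, hn⟩ ↦ (Submodule.eq_bot_iff _).1 hPQ x
    ⟨hP.mem_of_pow_mem n (hn ▸ P.zero_mem), hQ.mem_of_pow_mem n (hn ▸ Q.zero_mem)⟩

end TwoPrimes

section CompleteGraph

lemma nonempty_ringEquiv_zmod_two {S : Type*} [CommRing S] [Nontrivial S]
    (h : ∀ s : S, s = 0 ∨ s = 1) : Nonempty (S ≃+* ZMod 2) := by
  have : CharP S 2 := by
    rw [CharP.charP_iff_prime_eq_zero Nat.prime_two]
    rcases h 2 with h2 | h2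
    · exact_mod_cast h2
    · exact absurd (by linear_combination h2 : (1 : S) = 0) one_ne_zero
  refine ⟨(RingEquiv.ofBijective (ZMod.castHom dvd_rfl S)
    ⟨ZMod.castHom_injective S, fun s ↦ ?_⟩).symm⟩
  rcases h s with rfl | rfl
  exacts [⟨0, map_zero _⟩, ⟨1, map_one _⟩]

lemma zmod_two_prod_mul_eq_zero {x y : ZMod 2 × ZMod 2} (hx : x ∈ zdSet _) (hy : y ∈ zdSet _)
    (hxy : x ≠ y) : x * y = 0 := by
  revert x y
  simp only [zdSet, Set.mem_ofPred_eq]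
  decide

variable {R : Type*} [CommRing R]

lemma mul_eq_zero_of_ringEquiv_zmod_two_prod (e : R ≃+* ZMod 2 × ZMod 2) {x y : R}
    (hx : x ∈ zdSet R) (hy : y ∈ zdSet R) (hxy : x ≠ y) : x * y = 0 :=
  (map_eq_zero_iff e e.injective).1 <| by
    rw [map_mul]
    exact zmod_two_prod_mul_eq_zero (map_mem_zdSet e.injective hx)
      (map_mem_zdSet e.injective hy) (e.injective.ne hxy)

lemma one_sub_mem_zdStar {e : R} (he : e ∈ zdStar R) (he' : IsIdempotentElem e) :
    1 - e ∈ zdStar R := by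
  obtain ⟨he0, y, hy, hey⟩ := he
  exact ⟨fun h ↦ hy (by linear_combination hey + y * h), e, he0,
    by linear_combination -he'.eq⟩

variable [IsReduced R]

lemma isIdempotentElem_of_mem_zdStar
    (hcomp : ∀ x ∈ zdStar R, ∀ y ∈ zdStar R, x ≠ y → x * y = 0) {x : R} (hx : x ∈ zdStar R) :
    IsIdempotentElem x := by
  obtain ⟨hx0, y, hy, hxy⟩ := hx
  have hxx : x * x ≠ 0 := fun h ↦ hx0 (IsReduced.eq_zero x ⟨2, by rw [sq, h]⟩)
  by_contra hne
  have hxxx : x * x * x = 0 :=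
    hcomp _ ⟨hxx, y, hy, by rw [mul_assoc, hxy, mul_zero]⟩ x ⟨hx0, y, hy, hxy⟩ hne
  exact hx0 (IsReduced.eq_zero x ⟨3, by linear_combination hxxx⟩)

lemma mul_eq_zero_or_mul_eq_self_of_mem_zdStar
    (hcomp : ∀ x ∈ zdStar R, ∀ y ∈ zdStar R, x ≠ y → x * y = 0) {e : R} (he : e ∈ zdStar R)
    (r : R) : r * e = 0 ∨ r * e = e := by
  have he' := isIdempotentElem_of_mem_zdStar hcomp he
  by_contra! ⟨hre, hree⟩
  have hre_mem : r * e ∈ zdStar R :=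
    ⟨hre, 1 - e, (one_sub_mem_zdStar he he').1, by linear_combination -r * he'.eq⟩
  exact hre (by linear_combination hcomp _ hre_mem e he hree - r * he'.eq)

lemma nonempty_quotient_ringEquiv_zmod_two
    (hcomp : ∀ x ∈ zdStar R, ∀ y ∈ zdStar R, x ≠ y → x * y = 0) {e : R} (he : e ∈ zdStar R) :
    Nonempty (R ⧸ Ideal.span {1 - e} ≃+* ZMod 2) := by
  have : Nontrivial (R ⧸ Ideal.span {1 - e}) :=
    Ideal.Quotient.nontrivial_iff.2 <| mt Ideal.span_singleton_eq_top.1 <|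
      not_isUnit_of_mem_zdSet (one_sub_mem_zdStar he (isIdempotentElem_of_mem_zdStar hcomp he)).2
  refine nonempty_ringEquiv_zmod_two fun q ↦ ?_
  obtain ⟨r, rfl⟩ := Ideal.Quotient.mk_surjective q
  have hr : Ideal.Quotient.mk (Ideal.span {1 - e}) r = Ideal.Quotient.mk _ (r * e) := by
    rw [Ideal.Quotient.eq, Ideal.mem_span_singleton']
    exact ⟨r, by ring⟩
  have he1 : Ideal.Quotient.mk (Ideal.span {1 - e}) e = 1 := by
    rw [← map_one (Ideal.Quotient.mk _), Ideal.Quotient.eq, Ideal.mem_span_singleton']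
    exact ⟨-1, by ring⟩
  rcases mul_eq_zero_or_mul_eq_self_of_mem_zdStar hcomp he r with h | h
  · exact Or.inl (by rw [hr, h, map_zero])
  · exact Or.inr (by rw [hr, h, he1])

lemma nonempty_ringEquiv_zmod_two_prod (hne : (zdStar R).Nonempty)
    (hcomp : ∀ x ∈ zdStar R, ∀ y ∈ zdStar R, x ≠ y → x * y = 0) :
    Nonempty (R ≃+* ZMod 2 × ZMod 2) := by
  obtain ⟨e, he⟩ := hne
  have he' := isIdempotentElem_of_mem_zdStar hcomp he
  obtain ⟨φ₁⟩ := nonempty_quotient_ringEquiv_zmod_two hcomp he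
  obtain ⟨φ₂⟩ := nonempty_quotient_ringEquiv_zmod_two hcomp (one_sub_mem_zdStar he he')
  rw [sub_sub_cancel] at φ₂
  exact ⟨(RingEquiv.ofBijective _ (RingHom.prod_bijective_of_isIdempotentElem he'.one_sub he'
    (sub_add_cancel 1 e) (by linear_combination -he'.eq))).trans (φ₁.prodCongr φ₂)⟩

end CompleteGraph

theorem stmt10 (R : Type u) [CommRing R] [Nontrivial R]
    (hcard : (zdStar R).Nontrivial) :
    (zdGraph R).ediam = 2 ↔
      (((∃ (D₁ : Type u) (D₂ : Type u) (_ : CommRing D₁) (_ : CommRing D₂)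
      (_ : IsDomain D₁) (_ : IsDomain D₂) (f : R →+* D₁ × D₂), Function.Injective f) ∧ ¬ Nonempty (R ≃+* (ZMod 2 × ZMod 2))) ∨
       ((∃ I : Ideal R, (I : Set R) = zdSet R) ∧ (∃ x ∈ zdSet R, ∃ y ∈ zdSet R, x * y ≠ 0) ∧
        (∀ x ∈ zdSet R, ∀ y ∈ zdSet R, x ≠ y → ∃ a : R, a ≠ 0 ∧ a * x = 0 ∧ a * y = 0))) := by
  rw [zdGraph_ediam_eq_two_iff, exists_injective_prod_isDomain_iff]
  constructor
  · rintro ⟨h, x, hx, y, hy, hne, hxy⟩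
    by_cases hZ : ∃ I : Ideal R, (I : Set R) = zdSet R
    · obtain ⟨I, hI⟩ := hZ
      exact Or.inr ⟨⟨I, hI⟩, ⟨x, hx.2, y, hy.2, hxy⟩,
        fun a ha b hb _ ↦ exists_annihilator_of_coe_eq_zdSet hI h ha hb⟩
    · obtain ⟨a, ha, b, hb, hab⟩ := exists_add_notMem_zdSet hZ
      exact Or.inl ⟨exists_isPrime_inf_eq_bot_of_add_notMem_zdSet h ha hb hab,
        fun ⟨e⟩ ↦ hxy (mul_eq_zero_of_ringEquiv_zmod_two_prod e hx.2 hy.2 hne)⟩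
  · rintro (⟨⟨P, Q, hP, hQ, hPQ⟩, hiso⟩ | ⟨⟨I, hI⟩, ⟨x, hx, y, hy, hxy⟩, hann⟩)
    · have := isReduced_of_isPrime_inf_eq_bot hP hQ hPQ
      refine ⟨hasCommonAnnihilators_of_isPrime_inf_eq_bot hP hQ hPQ, ?_⟩
      by_contra! hcomp
      exact hiso (nonempty_ringEquiv_zmod_two_prod hcard.nonempty hcomp)
    · exact ⟨.of_forall_ne hann, exists_ne_mul_ne_zero_of_coe_eq_zdSet hI hx hy hxy⟩
end
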